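/- For every odd integer n ≥ 3 and every integer l ≥ 0, the matrix (D_n E_n)^{2l} D_n equals the (n−1)×(n−1) integer matrix Q given by: Q_{1,n−1} = 1; Q_{i,i−1} = −1 for all 2 ≤ i ≤ n−1; Q_{i,n−1} = 4l+1 for every even index i with 2 ≤ i ≤ n−1 and Q_{i,n−1} = 1 for every odd index i with 3 ≤ i ≤ n−2; and all other entries of Q are 0. (In block form: the first row is (0, …, 0, 1), the block of rows 2,…,n−1 and columns 1,…,n−2 is −I_{n−2}, and the last column below the top entry alternates 4l+1, 1, 4l+1, 1, …, 4l+1.) -/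
import Mathlib

set_option maxHeartbeats 1000000


/-- The reduced Burau matrix `σ_{i,n} ∈ Mat_{n-1}(ℤ)` of the braid generator `σ_i ∈ B_n`
evaluated at `t = -1`, for `1 ≤ i ≤ n-1` (the index `i` is 1-based, rows/columns of the
matrix are 0-based): it agrees with the identity matrix except in row `i` (1-based), where
the entry in column `i-1` is `-1` (when `i ≥ 2`), the entry in column `i` is `1`, and the
entry in column `i+1` is `1` (when `i ≤ n-2`). -/
def burauSigma (n i : ℕ) : Matrix (Fin (n - 1)) (Fin (n - 1)) ℤ :=
  Matrix.of fun a b =>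
    if a.val + 1 = i then
      if b.val + 2 = i then -1 else if b.val + 1 = i then 1 else if b.val = i then 1 else 0
    else if a = b then 1 else 0

/-- `D_n = σ_{1,n} σ_{2,n} ⋯ σ_{n-1,n}`, the reduced Burau matrix at `t = -1` of
`δ = σ_1 σ_2 ⋯ σ_{n-1} ∈ B_n`. -/
def burauD (n : ℕ) : Matrix (Fin (n - 1)) (Fin (n - 1)) ℤ :=
  ((List.range (n - 1)).map fun i => burauSigma n (i + 1)).prod

/-- `E_n = σ_{n-1,n} σ_{n-2,n} ⋯ σ_{1,n}`, the reduced Burau matrix at `t = -1` of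
`δ^Δ = σ_{n-1} σ_{n-2} ⋯ σ_1 ∈ B_n`. -/
def burauE (n : ℕ) : Matrix (Fin (n - 1)) (Fin (n - 1)) ℤ :=
  ((List.range (n - 1)).reverse.map fun i => burauSigma n (i + 1)).prod

def Rmat (n k : ℕ) : Matrix (Fin (n - 1)) (Fin (n - 1)) ℤ :=
  Matrix.of fun a b =>
    if a.val = k then (if b.val + 1 = k then -1 else if b.val = k + 1 then 1 else 0) else 0

lemma sigma_eq (n k : ℕ) : burauSigma n (k + 1) = 1 + Rmat n k := by
  ext a b
  simp only [burauSigma, Rmat, Matrix.add_apply, Matrix.one_apply, Matrix.of_apply, Fin.ext_iff]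
  split_ifs <;> omega

lemma sum_eq_single_val {m : ℕ} (f : Fin m → ℤ) (p : ℕ → Prop) [DecidablePred p]
    (j : ℕ) (hj : j < m) (hp : ∀ i < m, (p i ↔ i = j)) :
    (∑ c : Fin m, if p c.val then f c else 0) = f ⟨j, hj⟩ := by
  rw [Fintype.sum_eq_single (⟨j, hj⟩ : Fin m)]
  · rw [if_pos ((hp j hj).2 rfl)]
  · intro c hc
    rw [if_neg]
    intro hpc
    exact hc (Fin.ext ((hp c.val c.isLt).1 hpc))

lemma sum_eq_zero_val {m : ℕ} (f : Fin m → ℤ) (p : ℕ → Prop) [DecidablePred p]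
    (hp : ∀ i < m, ¬ p i) :
    (∑ c : Fin m, if p c.val then f c else 0) = 0 :=
  Finset.sum_eq_zero fun c _ => if_neg (hp c.val c.isLt)

def Pmat (n k : ℕ) : Matrix (Fin (n - 1)) (Fin (n - 1)) ℤ :=
  Matrix.of fun a b =>
    if a.val < k then
      (if b.val + 1 = k then 1 else if b.val = k then 1 else if a.val = b.val + 1 then -1 else 0)
    else if a = b then 1 else 0

def Gmat (n k : ℕ) : Matrix (Fin (n - 1)) (Fin (n - 1)) ℤ :=
  Matrix.of fun a b =>
    if a.val < k then
      (if b.val = a.val + 1 then 1 else if b.val = 0 then (if a.val % 2 = 0 then 1 else -1) else 0)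
    else if a = b then 1 else 0

lemma Dprod (n : ℕ) : ∀ k, k ≤ n - 1 →
    ((List.range k).map fun i => burauSigma n (i + 1)).prod = Pmat n k := by
  intro k
  induction k with
  | zero =>
      intro _
      ext a b
      simp only [List.range_zero, List.map_nil, List.prod_nil, Pmat, Matrix.of_apply,
        Matrix.one_apply, Nat.not_lt_zero, if_false]
  | succ k ih =>
      intro hk
      have hk' : k < n - 1 := by omega
      rw [List.range_succ, List.map_append, List.prod_append, List.map_singleton,
        List.prod_singleton, ih (by omega), sigma_eq, mul_add, mul_one]
      ext a b
      rw [Matrix.add_apply, Matrix.mul_apply]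
      have hsum : ∑ c : Fin (n-1), Pmat n k a c * Rmat n k c b
          = Pmat n k a ⟨k, hk'⟩ * (if b.val + 1 = k then -1 else if b.val = k + 1 then 1 else 0) := by
        have h1 : ∀ c : Fin (n-1), Pmat n k a c * Rmat n k c b
            = (if c.val = k then Pmat n k a c * ((if b.val + 1 = k then -1 else if b.val = k + 1 then 1 else 0)) else 0) := by
          intro c
          simp only [Rmat, Matrix.of_apply]
          split_ifs <;> ring
        rw [Finset.sum_congr rfl fun c _ => h1 c,
          sum_eq_single_val (fun c => Pmat n k a c * _) (fun i => i = k) k hk' (fun i _ => Iff.rfl)]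
      rw [hsum]
      have ha := a.isLt; have hb := b.isLt
      simp only [Pmat, Matrix.of_apply, Fin.ext_iff]
      split_ifs <;> omega


lemma Gmat_apply_lt {n k : ℕ} {a b : Fin (n-1)} (h : a.val < k) :
    Gmat n k a b = (if b.val = a.val + 1 then 1 else if b.val = 0 then
      (if a.val % 2 = 0 then 1 else -1) else 0) := by
  simp only [Gmat, Matrix.of_apply, if_pos h]

lemma Gmat_apply_ge {n k : ℕ} {a b : Fin (n-1)} (h : ¬ a.val < k) :
    Gmat n k a b = if a = b then 1 else 0 := by
  simp only [Gmat, Matrix.of_apply, if_neg h]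

lemma Eprod (n : ℕ) (hn : 3 ≤ n) : ∀ k, k ≤ n - 1 →
    ((List.range k).reverse.map fun i => burauSigma n (i + 1)).prod = Gmat n k := by
  intro k
  induction k with
  | zero =>
      intro _
      ext a b
      simp only [List.range_zero, List.reverse_nil, List.map_nil, List.prod_nil, Gmat,
        Matrix.of_apply, Matrix.one_apply, Nat.not_lt_zero, if_false]
  | succ k ih =>
      intro hk
      have hk' : k < n - 1 := by omega
      rw [List.range_succ, List.reverse_append, List.reverse_singleton, List.singleton_append,
        List.map_cons, List.prod_cons, ih (by omega), sigma_eq, add_mul, one_mul]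
      ext a b
      rw [Matrix.add_apply, Matrix.mul_apply]
      have ha := a.isLt; have hb := b.isLt
      by_cases hak : a.val = k
      · have h1 : ∀ c : Fin (n-1), Rmat n k a c * Gmat n k c b
            = (if c.val + 1 = k then -(Gmat n k c b) else 0)
              + (if c.val = k + 1 then Gmat n k c b else 0) := by
          intro c
          simp only [Rmat, Matrix.of_apply, hak, if_pos rfl]
          split_ifs <;> first | ring1 | (exfalso; first | assumption | omega)
        rw [Finset.sum_congr rfl fun c _ => h1 c, Finset.sum_add_distrib]
        rw [Gmat_apply_ge (show ¬ a.val < k by omega),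
          Gmat_apply_lt (show a.val < k + 1 by omega)]
        by_cases hk1 : 1 ≤ k
        · have hs1 : (∑ c : Fin (n-1), if c.val + 1 = k then -(Gmat n k c b) else 0)
              = -(Gmat n k ⟨k - 1, by omega⟩ b) :=
            sum_eq_single_val (fun c => -(Gmat n k c b)) (fun i => i + 1 = k) (k-1)
              (by omega) (fun i _ => by omega)
          rw [hs1, Gmat_apply_lt (show (⟨k - 1, by omega⟩ : Fin (n-1)).val < k by simp; omega)]
          by_cases hk2 : k + 1 < n - 1
          · have hs2 : (∑ c : Fin (n-1), if c.val = k + 1 then Gmat n k c b else 0)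
                = Gmat n k ⟨k + 1, hk2⟩ b :=
              sum_eq_single_val (fun c => Gmat n k c b) (fun i => i = k + 1) (k+1)
                hk2 (fun i _ => Iff.rfl)
            rw [hs2, Gmat_apply_ge (show ¬ (⟨k + 1, hk2⟩ : Fin (n-1)).val < k by simp)]
            simp only [Fin.ext_iff]
            split_ifs <;> omega
          · have hs2 : (∑ c : Fin (n-1), if c.val = k + 1 then Gmat n k c b else 0) = 0 := by
              refine sum_eq_zero_val _ (fun i => i = k + 1) fun i hi h => ?_
              omega
            rw [hs2]
            simp only [Fin.ext_iff]
            split_ifs <;> omega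
        · have hk0 : k = 0 := by omega
          subst hk0
          have hs1 : (∑ c : Fin (n-1), if c.val + 1 = 0 then -(Gmat n 0 c b) else 0) = 0 := by
            refine sum_eq_zero_val _ (fun i => i + 1 = 0) fun i hi h => ?_
            omega
          have h1n : 1 < n - 1 := by omega
          have hs2 : (∑ c : Fin (n-1), if c.val = 0 + 1 then Gmat n 0 c b else 0)
              = Gmat n 0 ⟨1, h1n⟩ b :=
            sum_eq_single_val (fun c => Gmat n 0 c b) (fun i => i = 0 + 1) 1
              h1n (fun i _ => by omega)
          rw [hs1, hs2, Gmat_apply_ge (show ¬ (⟨1, h1n⟩ : Fin (n-1)).val < 0 by simp)]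
          simp only [Fin.ext_iff]
          split_ifs <;> omega
      · have h0 : ∑ c : Fin (n-1), Rmat n k a c * Gmat n k c b = 0 :=
          Finset.sum_eq_zero fun c _ => by
            simp only [Rmat, Matrix.of_apply, if_neg hak, zero_mul]
        rw [h0, add_zero]
        simp only [Gmat, Matrix.of_apply, Fin.ext_iff]
        split_ifs <;> omega

lemma fin_val_mk {m j : ℕ} (h : j < m) : ((⟨j, h⟩ : Fin m) : ℕ) = j := rfl

def Dmat (n : ℕ) : Matrix (Fin (n - 1)) (Fin (n - 1)) ℤ :=
  Matrix.of fun a b => if b.val = n - 2 then 1 else if a.val = b.val + 1 then -1 else 0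

lemma burauD_eq (n : ℕ) (hn : 3 ≤ n) : burauD n = Dmat n := by
  rw [burauD, Dprod n (n-1) le_rfl]
  ext a b
  have ha := a.isLt; have hb := b.isLt
  simp only [Pmat, Dmat, Matrix.of_apply, Fin.ext_iff]
  split_ifs <;> omega

lemma burauE_eq (n : ℕ) (hn : 3 ≤ n) : burauE n = Gmat n (n-1) :=
  Eprod n hn (n-1) le_rfl

def Fmat (n : ℕ) : Matrix (Fin (n - 1)) (Fin (n - 1)) ℤ :=
  Matrix.of fun a b => (if a.val = b.val then -1 else 0)
    + (if b.val = 0 then (if a.val % 2 = 1 then -2 else 0) else 0)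

def F2mat (n : ℕ) : Matrix (Fin (n - 1)) (Fin (n - 1)) ℤ :=
  Matrix.of fun a b => (if a.val = b.val then 1 else 0)
    + (if b.val = 0 then (if a.val % 2 = 1 then 4 else 0) else 0)

def Qmat (n l : ℕ) : Matrix (Fin (n - 1)) (Fin (n - 1)) ℤ :=
  Matrix.of fun a b : Fin (n - 1) =>
    if b.val = n - 2 then (if a.val % 2 = 1 then 4 * (l : ℤ) + 1 else 1)
    else if a.val = b.val + 1 then -1 else 0

lemma DE (n : ℕ) (hn : 3 ≤ n) (hodd : Odd n) : Dmat n * Gmat n (n-1) = Fmat n := by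
  have hpar : (n - 2) % 2 = 1 := by obtain ⟨t, ht⟩ := hodd; omega
  ext a b
  rw [Matrix.mul_apply]
  have ha := a.isLt; have hb := b.isLt
  have h1 : ∀ c : Fin (n-1), Dmat n a c * Gmat n (n-1) c b
      = (if c.val = n-2 then Gmat n (n-1) c b else 0)
        + (if a.val = c.val + 1 then -(Gmat n (n-1) c b) else 0) := by
    intro c
    have hc := c.isLt
    simp only [Dmat, Matrix.of_apply]
    split_ifs <;> first | ring1 | (exfalso; first | assumption | omega)
  rw [Finset.sum_congr rfl fun c _ => h1 c, Finset.sum_add_distrib]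
  have hn2 : n - 2 < n - 1 := by omega
  have hs1 : (∑ c : Fin (n-1), if c.val = n-2 then Gmat n (n-1) c b else 0)
      = Gmat n (n-1) ⟨n-2, hn2⟩ b :=
    sum_eq_single_val _ (fun i => i = n-2) (n-2) hn2 (fun i _ => Iff.rfl)
  rw [hs1, Gmat_apply_lt (show ((⟨n-2, hn2⟩ : Fin (n-1)) : ℕ) < n - 1 from hn2)]
  by_cases ha0 : a.val = 0
  · have hs2 : (∑ c : Fin (n-1), if a.val = c.val + 1 then -(Gmat n (n-1) c b) else 0) = 0 := by
      refine sum_eq_zero_val _ (fun i => a.val = i + 1) fun i hi h => ?_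
      omega
    rw [hs2]
    simp only [Fmat, Matrix.of_apply, fin_val_mk]
    split_ifs <;> omega
  · have haa : a.val - 1 < n - 1 := by omega
    have hs2 : (∑ c : Fin (n-1), if a.val = c.val + 1 then -(Gmat n (n-1) c b) else 0)
        = -(Gmat n (n-1) ⟨a.val - 1, haa⟩ b) :=
      sum_eq_single_val _ (fun i => a.val = i + 1) (a.val - 1) haa (fun i hi => by omega)
    rw [hs2, Gmat_apply_lt (show ((⟨a.val - 1, haa⟩ : Fin (n-1)) : ℕ) < n - 1 from haa)]
    simp only [Fmat, Matrix.of_apply, fin_val_mk]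
    split_ifs <;> omega

lemma FF (n : ℕ) (hn : 3 ≤ n) : Fmat n * Fmat n = F2mat n := by
  have h0n : 0 < n - 1 := by omega
  ext a b
  rw [Matrix.mul_apply]
  have ha := a.isLt; have hb := b.isLt
  have h1 : ∀ c : Fin (n-1), Fmat n a c * Fmat n c b
      = (if c.val = a.val then -(Fmat n c b) else 0)
        + (if c.val = 0 then (if a.val % 2 = 1 then (-2) * Fmat n c b else 0) else 0) := by
    intro c
    have hc := c.isLt
    simp only [Fmat, Matrix.of_apply]
    split_ifs <;> first | ring1 | (exfalso; first | assumption | omega)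
  rw [Finset.sum_congr rfl fun c _ => h1 c, Finset.sum_add_distrib]
  have hs1 : (∑ c : Fin (n-1), if c.val = a.val then -(Fmat n c b) else 0)
      = -(Fmat n ⟨a.val, ha⟩ b) :=
    sum_eq_single_val _ (fun i => i = a.val) a.val ha (fun i _ => Iff.rfl)
  have hs2 : (∑ c : Fin (n-1), if c.val = 0 then (if a.val % 2 = 1 then (-2) * Fmat n c b else 0) else 0)
      = (if a.val % 2 = 1 then (-2) * Fmat n ⟨0, h0n⟩ b else 0) :=
    sum_eq_single_val (fun c => if a.val % 2 = 1 then (-2) * Fmat n c b else 0)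
      (fun i => i = 0) 0 h0n (fun i _ => Iff.rfl)
  rw [hs1, hs2]
  simp only [Fmat, F2mat, Matrix.of_apply, fin_val_mk]
  split_ifs <;> first | ring1 | (exfalso; first | assumption | omega)

lemma QF (n : ℕ) (hn : 3 ≤ n) (l : ℕ) : F2mat n * Qmat n l = Qmat n (l + 1) := by
  have h0n : 0 < n - 1 := by omega
  ext a b
  rw [Matrix.mul_apply]
  have ha := a.isLt; have hb := b.isLt
  have h1 : ∀ c : Fin (n-1), F2mat n a c * Qmat n l c b
      = (if c.val = a.val then Qmat n l c b else 0)
        + (if c.val = 0 then (if a.val % 2 = 1 then 4 * Qmat n l c b else 0) else 0) := by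
    intro c
    have hc := c.isLt
    simp only [F2mat, Matrix.of_apply]
    split_ifs <;> first | ring1 | (exfalso; first | assumption | omega)
  rw [Finset.sum_congr rfl fun c _ => h1 c, Finset.sum_add_distrib]
  have hs1 : (∑ c : Fin (n-1), if c.val = a.val then Qmat n l c b else 0)
      = Qmat n l ⟨a.val, ha⟩ b :=
    sum_eq_single_val _ (fun i => i = a.val) a.val ha (fun i _ => Iff.rfl)
  have hs2 : (∑ c : Fin (n-1), if c.val = 0 then (if a.val % 2 = 1 then 4 * Qmat n l c b else 0) else 0)
      = (if a.val % 2 = 1 then 4 * Qmat n l ⟨0, h0n⟩ b else 0) :=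
    sum_eq_single_val (fun c => if a.val % 2 = 1 then 4 * Qmat n l c b else 0)
      (fun i => i = 0) 0 h0n (fun i _ => Iff.rfl)
  rw [hs1, hs2]
  simp only [Qmat, Matrix.of_apply, fin_val_mk]
  split_ifs <;> first | (push_cast; ring1) | (exfalso; first | assumption | omega) | omega

lemma Q0 (n : ℕ) : Qmat n 0 = Dmat n := by
  ext a b
  simp only [Qmat, Dmat, Matrix.of_apply]
  split_ifs <;> norm_num
  

/-- For every odd integer `n ≥ 3` and every integer `l ≥ 0`, the matrix `(D_n E_n)^{2l} D_n`
equals the `(n-1)×(n-1)` matrix whose first row is `(0, …, 0, 1)`, whose block of rows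
`2,…,n-1` and columns `1,…,n-2` (1-based) is `-I_{n-2}`, and whose last column below the
top entry alternates `4l+1, 1, 4l+1, 1, …, 4l+1` (so the last-column entry in 1-based row
`i` is `4l+1` for even `i` and `1` for odd `i`); all other entries are `0`. -/
theorem burauDE_pow_mul_D_eq (n : ℕ) (hn : 3 ≤ n) (hodd : Odd n) (l : ℕ) :
    (burauD n * burauE n) ^ (2 * l) * burauD n = Matrix.of fun a b : Fin (n - 1) =>
      if b.val = n - 2 then (if a.val % 2 = 1 then 4 * (l : ℤ) + 1 else 1)
      else if a.val = b.val + 1 then -1 else 0 := by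
  rw [burauD_eq n hn, burauE_eq n hn, DE n hn hodd, pow_mul, pow_two, FF n hn]
  show F2mat n ^ l * Dmat n = Qmat n l
  induction l with
  | zero => rw [pow_zero, one_mul, Q0]
  | succ l ih => rw [pow_succ', mul_assoc, ih, QF n hn l]
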